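/- If X is a β-saturated fuzzy cycle on n vertices in which every β-strong edge has weight w, then the strong domination index of X equals n · ⌈n/3⌉ · w. -/

import Mathlib

open Finset

/-- A fuzzy graph on vertex type `V`. -/
structure FuzzyGraph (V : Type*) where
  ρ : V → ℝ
  υ : V → V → ℝ
  ρ_nonneg : ∀ a, 0 ≤ ρ a
  ρ_le_one : ∀ a, ρ a ≤ 1
  υ_nonneg : ∀ a b, 0 ≤ υ a b
  symm : ∀ a b, υ a b = υ b a
  υ_le : ∀ a b, υ a b ≤ min (ρ a) (ρ b)
  loopless : ∀ a, υ a a = 0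

namespace FuzzyGraph

variable {V : Type*} [Fintype V] [DecidableEq V]

/-- Strength of a path given by its list of successive vertices:
the minimum of the weights of its edges. -/
def pathStrength (X : FuzzyGraph V) : List V → ℝ
  | [] => 0
  | [_] => 0
  | [a, b] => X.υ a b
  | a :: b :: c :: l => min (X.υ a b) (X.pathStrength (b :: c :: l))

/-- `l` is a path from `a` to `b` : distinct vertices joined by positive-weight edges. -/
def IsPath (X : FuzzyGraph V) (a b : V) (l : List V) : Prop :=
  l.Nodup ∧ l.head? = some a ∧ l.getLast? = some b ∧ 2 ≤ l.length ∧
    l.Chain' (fun x y => 0 < X.υ x y)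

/-- Strength of connectedness between two vertices: maximum strength of a path. -/
noncomputable def conn (X : FuzzyGraph V) (a b : V) : ℝ :=
  sSup {s | ∃ l : List V, X.IsPath a b l ∧ s = X.pathStrength l}

/-- Delete the edge `ab` (set its weight to `0`). -/
def deleteEdge (X : FuzzyGraph V) (a b : V) : FuzzyGraph V where
  ρ := X.ρ
  υ x y := if (x = a ∧ y = b) ∨ (x = b ∧ y = a) then 0 else X.υ x y
  ρ_nonneg := X.ρ_nonneg
  ρ_le_one := X.ρ_le_one
  υ_nonneg := by
    intro x y; try dsimp only
    split_ifs
    · exact le_rfl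
    · exact X.υ_nonneg x y
  symm := by
    intro x y; try dsimp only
    by_cases h : (x = a ∧ y = b) ∨ (x = b ∧ y = a)
    · rw [if_pos h, if_pos (by tauto)]
    · rw [if_neg h, if_neg (by tauto), X.symm]
  υ_le := by
    intro x y; try dsimp only
    split_ifs
    · exact le_min (X.ρ_nonneg x) (X.ρ_nonneg y)
    · exact X.υ_le x y
  loopless := by
    intro x; try dsimp only
    split_ifs
    · rfl
    · exact X.loopless x

/-- `ab` is a strong edge (α- or β-strong). -/
def StrongEdge (X : FuzzyGraph V) (a b : V) : Prop :=
  0 < X.υ a b ∧ (X.deleteEdge a b).conn a b ≤ X.υ a b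

/-- `ab` is an α-strong edge. -/
def AlphaStrong (X : FuzzyGraph V) (a b : V) : Prop :=
  0 < X.υ a b ∧ (X.deleteEdge a b).conn a b < X.υ a b

/-- `ab` is a β-strong edge. -/
def BetaStrong (X : FuzzyGraph V) (a b : V) : Prop :=
  0 < X.υ a b ∧ X.υ a b = (X.deleteEdge a b).conn a b

/-- `ab` is a δ-edge. -/
def DeltaEdge (X : FuzzyGraph V) (a b : V) : Prop :=
  0 < X.υ a b ∧ X.υ a b < (X.deleteEdge a b).conn a b

/-- The minimum weight of a strong edge incident at `a`. -/
noncomputable def minInc (X : FuzzyGraph V) (a : V) : ℝ :=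
  sInf {w | ∃ b, X.StrongEdge a b ∧ w = X.υ a b}

/-- The weight of a set of vertices. -/
noncomputable def weight (X : FuzzyGraph V) (S : Finset V) : ℝ :=
  ∑ a ∈ S, X.minInc a

/-- `D` is a strong dominating set. -/
def IsSDS (X : FuzzyGraph V) (D : Finset V) : Prop :=
  ∀ v, v ∉ D → ∃ a ∈ D, X.StrongEdge a v

/-- `D` is a minimal strong dominating set. -/
def IsMinimalSDS (X : FuzzyGraph V) (D : Finset V) : Prop :=
  X.IsSDS D ∧ ∀ a ∈ D, ¬ X.IsSDS (D.erase a)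

/-- `D` is a minimum (least weight) strong dominating set. -/
def IsMinimumSDS (X : FuzzyGraph V) (D : Finset V) : Prop :=
  X.IsSDS D ∧ ∀ D' : Finset V, X.IsSDS D' → X.weight D ≤ X.weight D'

/-- The strong domination degree of a vertex. -/
noncomputable def sd (X : FuzzyGraph V) (u : V) : ℝ :=
  sInf {w | ∃ D : Finset V, X.IsMinimalSDS D ∧ u ∈ D ∧ w = X.weight D}

/-- The strong domination number. -/
noncomputable def gammaS (X : FuzzyGraph V) : ℝ :=
  sInf {w | ∃ D : Finset V, X.IsSDS D ∧ w = X.weight D}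

/-- The upper strong domination number. -/
noncomputable def GammaS (X : FuzzyGraph V) : ℝ :=
  sSup {w | ∃ D : Finset V, X.IsMinimalSDS D ∧ w = X.weight D}

/-- The strong domination index. -/
noncomputable def SDI (X : FuzzyGraph V) : ℝ := ∑ u : V, X.sd u

/-- `X` is connected. -/
def Connected (X : FuzzyGraph V) : Prop := ∀ a b : V, a ≠ b → ∃ l, X.IsPath a b l

/-- `X` is a strong fuzzy graph: every edge is strong. -/
def IsStrongFG (X : FuzzyGraph V) : Prop := ∀ a b, 0 < X.υ a b → X.StrongEdge a b

/-- Underlying (support) simple graph. -/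
def support (X : FuzzyGraph V) : SimpleGraph V where
  Adj a b := 0 < X.υ a b
  symm := ⟨fun a b (h : 0 < X.υ a b) => show 0 < X.υ b a by rw [X.symm]; exact h⟩
  loopless := ⟨fun a (h : 0 < X.υ a a) => by rw [X.loopless] at h; exact lt_irrefl 0 h⟩

/-- `X` is a fuzzy tree. -/
def IsFuzzyTree (X : FuzzyGraph V) : Prop :=
  ∃ F : FuzzyGraph V, F.ρ = X.ρ ∧ (∀ a b, F.υ a b = X.υ a b ∨ F.υ a b = 0) ∧
    F.support.IsTree ∧ ∀ a b, 0 < X.υ a b → F.υ a b = 0 → X.υ a b < F.conn a b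

/-- The size of a fuzzy graph: the sum of all edge weights. -/
noncomputable def size (X : FuzzyGraph V) : ℝ := (∑ a : V, ∑ b : V, X.υ a b) / 2

/-- The underlying graph of `X` is a cycle. -/
def IsCycleGraph (X : FuzzyGraph V) : Prop :=
  ∃ n : ℕ, 3 ≤ n ∧ ∃ f : ZMod n ≃ V,
    ∀ x y : V, 0 < X.υ x y ↔ ∃ i : ZMod n, (x = f i ∧ y = f (i + 1)) ∨ (x = f (i + 1) ∧ y = f i)

/-- `X` is a fuzzy cycle: a cycle with at least two edges of minimum weight. -/
def IsFuzzyCycle (X : FuzzyGraph V) : Prop :=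
  X.IsCycleGraph ∧ ∃ a b c d : V, 0 < X.υ a b ∧ 0 < X.υ c d ∧
    Sym2.mk (a, b) ≠ Sym2.mk (c, d) ∧ X.υ a b = X.υ c d ∧
    ∀ x y, 0 < X.υ x y → X.υ a b ≤ X.υ x y

/-- A set of pairwise fuzzy independent vertices. -/
def IsFuzzyIndep (X : FuzzyGraph V) (S : Finset V) : Prop :=
  ∀ a ∈ S, ∀ b ∈ S, a ≠ b → ¬ X.StrongEdge a b

/-- The strong independent domination number. -/
noncomputable def iS (X : FuzzyGraph V) : ℝ :=
  sInf {w | ∃ D : Finset V, X.IsSDS D ∧ X.IsFuzzyIndep D ∧ w = X.weight D}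

/-- The strong independence number. -/
noncomputable def betaS (X : FuzzyGraph V) : ℝ :=
  sSup {w | ∃ S : Finset V, X.IsFuzzyIndep S ∧ w = X.weight S}

/-- Closed strong neighborhood. -/
def closedNbhd (X : FuzzyGraph V) (a : V) : Set V := insert a {b | X.StrongEdge a b}

/-- Open strong neighborhood. -/
def openNbhd (X : FuzzyGraph V) (a : V) : Set V := {b | X.StrongEdge a b}

/-- Private neighborhood of `a` with respect to `S`. -/
def privNbhd (X : FuzzyGraph V) (a : V) (S : Finset V) : Set V :=
  X.closedNbhd a \ ⋃ b ∈ S.erase a, X.closedNbhd b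

/-- `S` is a fuzzy irredundant set. -/
def IsIrredundant (X : FuzzyGraph V) (S : Finset V) : Prop :=
  ∀ a ∈ S, (X.privNbhd a S).Nonempty

/-- `S` is a maximal fuzzy irredundant set. -/
def IsMaximalIrredundant (X : FuzzyGraph V) (S : Finset V) : Prop :=
  X.IsIrredundant S ∧ ∀ v ∉ S, ¬ X.IsIrredundant (insert v S)

/-- The strong irredundance number. -/
noncomputable def irS (X : FuzzyGraph V) : ℝ :=
  sInf {w | ∃ S : Finset V, X.IsMaximalIrredundant S ∧ w = X.weight S}

end FuzzyGraph

/-! Label the cycle by `ZMod n`. Deleting an edge `xy` leaves the rest of the cycle as a path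
from `x` to `y`, and every such path crosses each other edge, since that edge and `xy` cut the
cycle in two. Taking another edge of minimum weight `m` (β-saturation provides one), `xy` is
strong with `conn = m`. So every edge is strong, the β-strong edges are those of weight `m = w`,
and each vertex, lying on one of them, has weight `w`. Strong domination is now domination in
`Cₙ`: a dominating set has at least `⌈n/3⌉` vertices, and every third vertex from any `u` on is
one of exactly that size, hence minimal; so `sd u = ⌈n/3⌉ w` for each of the `n` vertices. -/

theorem Nat.ceil_natCast_div_three (n : ℕ) : ⌈(n : ℝ) / 3⌉₊ = (n + 2) / 3 := by
  have h₁ : (n : ℝ) ≤ 3 * ⌈(n : ℝ) / 3⌉₊ := by linarith [Nat.le_ceil ((n : ℝ) / 3)]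
  have h₂ : (3 * ⌈(n : ℝ) / 3⌉₊ : ℝ) < n + 3 := by
    linarith [Nat.ceil_lt_add_one (by positivity : (0 : ℝ) ≤ n / 3)]
  have : n ≤ 3 * ⌈(n : ℝ) / 3⌉₊ := by exact_mod_cast h₁
  have : 3 * ⌈(n : ℝ) / 3⌉₊ < n + 3 := by exact_mod_cast h₂
  omega

namespace ZMod

variable {n : ℕ}

theorem natCast_inj_of_lt {s t : ℕ} (hs : s < n) (ht : t < n) : (s : ZMod n) = t ↔ s = t :=
  ⟨fun h => by rw [← val_cast_of_lt hs, ← val_cast_of_lt ht, h], congrArg _⟩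

theorem val_add_one_of_ne_neg_one [NeZero n] (hn : n ≠ 1) {a : ZMod n} (ha : a ≠ -1) :
    (a + 1).val = a.val + 1 := by
  rw [val_add, val_one'' hn]
  refine Nat.mod_eq_of_lt (lt_of_le_of_ne (val_lt a) fun h => ha ?_)
  rw [← natCast_zmod_val a, ← add_eq_zero_iff_eq_neg, ← Nat.cast_add_one, h, natCast_self]

theorem val_le_iff_val_add_one_le [NeZero n] (hn : n ≠ 1) {a b : ZMod n} (ha : a ≠ -1)
    (hab : a ≠ b) : a.val ≤ b.val ↔ (a + 1).val ≤ b.val := by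
  have := (val_injective n).ne hab
  rw [val_add_one_of_ne_neg_one hn ha]
  omega

theorem val_lt_val_neg_one [NeZero n] (hn : n ≠ 1) {a : ZMod n} (ha : a ≠ -1) :
    a.val < (-1 : ZMod n).val := by
  have h := val_add_one_of_ne_neg_one hn ha ▸ val_lt (a + 1)
  rw [neg_val, if_neg (fun h => by simpa [h] using val_one'' hn), val_one'' hn]
  omega

theorem exists_lt_eq_three_mul_add [NeZero n] (z : ZMod n) :
    ∃ t < (n + 2) / 3, z = (3 * t : ℕ) ∨ z = (3 * t : ℕ) + 1 ∨ z = (3 * t : ℕ) - 1 := by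
  have hz := val_lt z
  rw [← natCast_zmod_val z]
  obtain h | h | h : z.val % 3 = 0 ∨ z.val % 3 = 1 ∨ z.val % 3 = 2 := by omega
  · exact ⟨z.val / 3, by omega, .inl (by congr 1; omega)⟩
  · exact ⟨z.val / 3, by omega, .inr (.inl (by rw [← Nat.cast_add_one]; congr 1; omega))⟩
  · by_cases hz3 : z.val + 1 < n
    · refine ⟨z.val / 3 + 1, by omega, .inr (.inr ?_)⟩
      rw [eq_sub_iff_add_eq, ← Nat.cast_add_one]
      congr 1; omega
    · refine ⟨0, by omega, .inr (.inr ?_)⟩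
      rw [eq_sub_iff_add_eq, ← Nat.cast_add_one, show z.val + 1 = n by omega, natCast_self]
      simp

end ZMod

namespace FuzzyGraph

variable {V : Type*}

section General

variable (X : FuzzyGraph V)

theorem le_pathStrength_of_isChain {c : ℝ} : ∀ {l : List V}, 2 ≤ l.length →
    l.IsChain (fun x y => c ≤ X.υ x y) → c ≤ X.pathStrength l
  | [], hl, _ | [_], hl, _ => by simp at hl
  | [_, _], _, h => by simpa [pathStrength] using h
  | _ :: _ :: _ :: _, _, h => by
      rw [List.isChain_cons_cons] at h
      exact le_min h.1 (le_pathStrength_of_isChain (by simp) h.2)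

theorem isChain_of_lt_pathStrength {c : ℝ} :
    ∀ {l : List V}, c < X.pathStrength l → l.IsChain (fun x y => c < X.υ x y)
  | [], _ => .nil
  | [_], _ => .singleton _
  | [_, _], h => by simpa [pathStrength] using h
  | _ :: _ :: _ :: _, h => by
      rw [pathStrength, lt_min_iff] at h
      exact .cons_cons h.1 (isChain_of_lt_pathStrength h.2)

theorem pathStrength_le_one : ∀ l : List V, X.pathStrength l ≤ 1
  | [] | [_] => zero_le_one
  | [a, b] => (X.υ_le a b).trans ((min_le_left _ _).trans (X.ρ_le_one a))
  | _ :: b :: c :: l => (min_le_right _ _).trans (pathStrength_le_one (b :: c :: l))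

theorem pathStrength_le_conn {a b : V} {l : List V} (hl : X.IsPath a b l) :
    X.pathStrength l ≤ X.conn a b :=
  le_csSup ⟨1, by rintro _ ⟨l, -, rfl⟩; exact X.pathStrength_le_one l⟩ ⟨l, hl, rfl⟩

theorem conn_le {a b : V} {c : ℝ} (hpath : ∃ l, X.IsPath a b l)
    (hle : ∀ l, X.IsPath a b l → X.pathStrength l ≤ c) : X.conn a b ≤ c := by
  obtain ⟨l, hl⟩ := hpath
  exact csSup_le ⟨_, l, hl, rfl⟩ (by rintro _ ⟨l, hl, rfl⟩; exact hle l hl)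

theorem pathStrength_le_of_separating {a b : V} {l : List V} (hl : X.IsPath a b l) {c : ℝ}
    (P : V → Prop) (hP : ∀ x y, c < X.υ x y → (P x ↔ P y)) (hab : ¬(P a ↔ P b)) :
    X.pathStrength l ≤ c := by
  obtain ⟨-, hhead, hlast, -, -⟩ := hl
  obtain ⟨l, rfl⟩ := List.head?_eq_some_iff.1 hhead
  by_contra! hlt
  refine hab (List.IsChain.induction (fun v => P a ↔ P v) _ (X.isChain_of_lt_pathStrength hlt)
    (fun x y hxy hx => hx.trans (hP x y hxy)) (fun _ => Iff.rfl) b (List.mem_of_getLast? hlast))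

theorem IsPath.reverse {a b : V} {l : List V} (h : X.IsPath a b l) : X.IsPath b a l.reverse := by
  obtain ⟨hnd, hhead, hlast, hlen, hc⟩ := h
  exact ⟨List.nodup_reverse.2 hnd, by rwa [List.head?_reverse], by rwa [List.getLast?_reverse],
    by rwa [List.length_reverse], List.isChain_reverse.2 (hc.imp fun x y h => by rwa [X.symm])⟩

theorem υ_eq_of_sym2_eq {a b x y : V} (h : s(x, y) = s(a, b)) : X.υ x y = X.υ a b := by
  rcases Sym2.eq_iff.1 h with ⟨rfl, rfl⟩ | ⟨rfl, rfl⟩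
  exacts [rfl, X.symm _ _]

variable [DecidableEq V]

theorem deleteEdge_υ (a b x y : V) :
    (X.deleteEdge a b).υ x y = if s(x, y) = s(a, b) then 0 else X.υ x y := by
  simp only [deleteEdge, Sym2.eq_iff]

theorem minInc_eq_of_strongEdge {a b : V} (hab : X.StrongEdge a b)
    (hmin : ∀ c, X.StrongEdge a c → X.υ a b ≤ X.υ a c) : X.minInc a = X.υ a b :=
  IsLeast.csInf_eq ⟨⟨b, hab, rfl⟩, by rintro _ ⟨c, hc, rfl⟩; exact hmin c hc⟩

theorem weight_eq_card_mul {m : ℝ} (hm : ∀ a, X.minInc a = m) (S : Finset V) :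
    X.weight S = S.card * m := by
  simp [weight, hm]

theorem isMinimalSDS_of_card_le {D : Finset V} {k : ℕ} (hD : X.IsSDS D) (hcard : D.card ≤ k)
    (hk : ∀ D', X.IsSDS D' → k ≤ D'.card) : X.IsMinimalSDS D := by
  refine ⟨hD, fun a ha hD' => ?_⟩
  have := hk _ hD'
  rw [card_erase_of_mem ha] at this
  have := card_pos.2 ⟨a, ha⟩
  omega

theorem sd_eq_of_minInc_eq {m : ℝ} (hm₀ : 0 ≤ m) (hm : ∀ a, X.minInc a = m) {k : ℕ}
    (hk : ∀ D, X.IsSDS D → k ≤ D.card) {u : V} (hu : ∃ D, X.IsSDS D ∧ u ∈ D ∧ D.card = k) :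
    X.sd u = k * m := by
  obtain ⟨D, hD, huD, rfl⟩ := hu
  refine IsLeast.csInf_eq ⟨⟨D, X.isMinimalSDS_of_card_le hD le_rfl hk, huD,
    (X.weight_eq_card_mul hm D).symm⟩, ?_⟩
  rintro _ ⟨D', hD', -, rfl⟩
  rw [X.weight_eq_card_mul hm]
  exact mul_le_mul_of_nonneg_right (by exact_mod_cast hk D' hD'.1) hm₀

end General

end FuzzyGraph

namespace FuzzyGraph

variable {V : Type*} {n : ℕ}

def IsCycleLabelling (X : FuzzyGraph V) (f : ZMod n ≃ V) : Prop :=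
  ∀ x y : V, 0 < X.υ x y ↔ ∃ i : ZMod n, s(x, y) = s(f i, f (i + 1))

theorem IsCycleGraph.exists_isCycleLabelling {X : FuzzyGraph V} (h : X.IsCycleGraph) :
    ∃ n, 3 ≤ n ∧ ∃ f : ZMod n ≃ V, X.IsCycleLabelling f := by
  obtain ⟨n, hn, f, hf⟩ := h
  exact ⟨n, hn, f, fun x y => by simp only [hf, Sym2.eq_iff]⟩

theorem eq_of_sym2_eq_succ (hn : 3 ≤ n) (f : ZMod n ≃ V) {i k : ZMod n}
    (h : s(f k, f (k + 1)) = s(f i, f (i + 1))) : k = i := by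
  rcases Sym2.eq_iff.1 h with ⟨h, -⟩ | ⟨h₁, h₂⟩
  · exact f.injective h
  · have h₁ := f.injective h₁
    have h₂ := f.injective h₂
    have h2 : ((2 : ℕ) : ZMod n) = 0 := by push_cast; linear_combination h₂ - h₁
    have := Nat.le_of_dvd two_pos ((ZMod.natCast_eq_zero_iff 2 n).1 h2)
    omega

def cycleArc (f : ZMod n ≃ V) (i : ZMod n) : List V :=
  (List.range n).map fun s : ℕ => f (i + 1 + (s : ZMod n))

variable {X : FuzzyGraph V} {f : ZMod n ≃ V}

namespace IsCycleLabelling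

theorem eq_succ_or_eq_pred (hf : X.IsCycleLabelling f) {a v : V} (h : 0 < X.υ a v) :
    v = f (f.symm a + 1) ∨ v = f (f.symm a - 1) := by
  obtain ⟨i, hi⟩ := (hf a v).1 h
  rcases Sym2.eq_iff.1 hi with ⟨rfl, rfl⟩ | ⟨rfl, rfl⟩ <;> simp

theorem card_le_three_mul [NeZero n] [Fintype V] [DecidableEq V] (hf : X.IsCycleLabelling f)
    {D : Finset V} (hD : X.IsSDS D) : n ≤ 3 * D.card := by
  have hcover :
      (univ : Finset V) ⊆ D.biUnion fun a => {a, f (f.symm a + 1), f (f.symm a - 1)} := by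
    intro v _
    rw [mem_biUnion]
    by_cases hv : v ∈ D
    · exact ⟨v, hv, mem_insert_self _ _⟩
    · obtain ⟨a, ha, hav⟩ := hD v hv
      exact ⟨a, ha, by rcases hf.eq_succ_or_eq_pred hav.1 with rfl | rfl <;> simp⟩
  calc n = (univ : Finset V).card := by rw [card_univ, ← Fintype.card_congr f, ZMod.card]
    _ ≤ D.card * 3 :=
      (card_le_card hcover).trans (card_biUnion_le_card_mul _ _ _ fun _ _ => card_le_three)
    _ = 3 * D.card := mul_comm _ _

theorem exists_isSDS_mem_card [NeZero n] [DecidableEq V] (hf : X.IsCycleLabelling f)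
    (hstrong : ∀ x y, 0 < X.υ x y → X.StrongEdge x y) (u : V) :
    ∃ D, X.IsSDS D ∧ u ∈ D ∧ D.card = (n + 2) / 3 := by
  set g : ℕ → V := fun t => f (f.symm u + (3 * t : ℕ))
  have hg : ∀ t, f.symm (g t) = f.symm u + (3 * t : ℕ) := fun t => f.symm_apply_apply _
  refine ⟨(range ((n + 2) / 3)).image g, fun v hv => ?_,
    mem_image.2 ⟨0, mem_range.2 (by have := NeZero.pos n; omega), by simp [g]⟩, ?_⟩
  · obtain ⟨t, ht, h | h | h⟩ := ZMod.exists_lt_eq_three_mul_add (f.symm v - f.symm u)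
    · refine absurd (mem_image.2 ⟨t, mem_range.2 ht, f.symm.injective ?_⟩) hv
      rw [hg, ← h, add_sub_cancel]
    all_goals
      refine ⟨g t, mem_image_of_mem _ (mem_range.2 ht), hstrong _ _ ((hf _ _).2 ?_)⟩
    · rw [sub_eq_iff_eq_add', ← add_assoc, ← hg] at h
      exact ⟨f.symm (g t), by rw [← h]; simp⟩
    · rw [sub_eq_iff_eq_add', ← add_sub_assoc, ← hg] at h
      exact ⟨f.symm (g t) - 1, by rw [sub_add_cancel, ← h, Sym2.eq_swap]; simp⟩
  · rw [card_image_of_injOn, card_range]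
    intro s hs t ht hst
    simp only [coe_range, Set.mem_Iio] at hs ht
    exact Nat.eq_of_mul_eq_mul_left three_pos
      ((ZMod.natCast_inj_of_lt (by omega) (by omega)).1 (add_left_cancel (f.injective hst)))

theorem isChain_cycleArc [DecidableEq V] (hf : X.IsCycleLabelling f) (hn : 3 ≤ n) {a b : V}
    {i : ZMod n} (hab : s(a, b) = s(f i, f (i + 1))) :
    (cycleArc f i).IsChain fun x y => (X.deleteEdge a b).υ x y = X.υ x y ∧ 0 < X.υ x y := by
  rw [cycleArc, List.isChain_map, List.isChain_range]
  intro s hs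
  have hk : s(f (i + 1 + s), f (i + 1 + s + 1)) ≠ s(a, b) := fun h => by
    have h₀ := eq_of_sym2_eq_succ hn f (h.trans hab)
    have : ((s + 1 : ℕ) : ZMod n) = ((0 : ℕ) : ZMod n) := by push_cast; linear_combination h₀
    have := (ZMod.natCast_inj_of_lt (by omega) (by omega)).1 this
    omega
  rw [show i + 1 + ((s.succ : ℕ) : ZMod n) = i + 1 + s + 1 by push_cast; ring, deleteEdge_υ,
    if_neg hk]
  exact ⟨rfl, (hf _ _).2 ⟨_, rfl⟩⟩

theorem isPath_cycleArc [DecidableEq V] (hf : X.IsCycleLabelling f) (hn : 3 ≤ n) {a b : V}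
    {i : ZMod n} (hab : s(a, b) = s(f i, f (i + 1))) :
    (X.deleteEdge a b).IsPath (f (i + 1)) (f i) (cycleArc f i) := by
  refine ⟨List.nodup_range.map_on fun s hs t ht h => ?_, ?_, ?_, ?_,
    (hf.isChain_cycleArc hn hab).imp fun _ _ h => by rw [h.1]; exact h.2⟩
  · rw [List.mem_range] at hs ht
    exact (ZMod.natCast_inj_of_lt hs ht).1 (add_left_cancel (f.injective h))
  · simp [cycleArc, List.head?_range]
    omega
  · simp [cycleArc, List.getLast?_range, if_neg (by omega : n ≠ 0),
      Nat.cast_sub (by omega : 1 ≤ n)]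
  · simp [cycleArc]
    omega

theorem pathStrength_deleteEdge_le [DecidableEq V] (hf : X.IsCycleLabelling f) (hn : 2 ≤ n)
    {x y x' y' : V} (hxy : 0 < X.υ x y) (hx'y' : 0 < X.υ x' y') (hne : s(x', y') ≠ s(x, y))
    {l : List V} (hl : (X.deleteEdge x y).IsPath x y l) :
    (X.deleteEdge x y).pathStrength l ≤ X.υ x' y' := by
  have : NeZero n := ⟨by omega⟩
  obtain ⟨i, hi⟩ := (hf x y).1 hxy
  obtain ⟨j, hj⟩ := (hf x' y').1 hx'y'
  have hji : j - (i + 1) ≠ -1 := fun h =>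
    hne (hj.trans (by rw [show j = i by linear_combination h]; exact hi.symm))
  -- the arc from `f (i + 1)` to `f j` is one side of the cut formed by the edges `xy` and `x'y'`
  let P : V → Prop := fun v => (f.symm v - (i + 1)).val ≤ (j - (i + 1)).val
  refine (X.deleteEdge x y).pathStrength_le_of_separating hl P (fun u v huv => ?_) ?_
  · rw [deleteEdge_υ] at huv
    split_ifs at huv with hdel
    · exact absurd huv (not_lt.2 hx'y'.le)
    obtain ⟨k, hk⟩ := (hf u v).1 (hx'y'.trans huv)
    have hki : k - (i + 1) ≠ -1 := fun h =>
      hdel (hk.trans (by rw [show k = i by linear_combination h]; exact hi.symm))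
    have hkj : k - (i + 1) ≠ j - (i + 1) := fun h => huv.ne' (by
      rw [X.υ_eq_of_sym2_eq hk, sub_left_inj.1 h, ← X.υ_eq_of_sym2_eq hj])
    have key : P (f k) ↔ P (f (k + 1)) := by
      simp only [P, Equiv.symm_apply_apply, show k + 1 - (i + 1) = k - (i + 1) + 1 by ring]
      exact ZMod.val_le_iff_val_add_one_le (by omega) hki hkj
    rcases Sym2.eq_iff.1 hk with ⟨rfl, rfl⟩ | ⟨rfl, rfl⟩
    exacts [key, key.symm]
  · have h₁ : P (f (i + 1)) := by simp [P]
    have h₂ : ¬P (f i) := by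
      simp only [P, Equiv.symm_apply_apply, sub_add_cancel_left]
      exact not_le.2 (ZMod.val_lt_val_neg_one (by omega) hji)
    rcases Sym2.eq_iff.1 hi with ⟨rfl, rfl⟩ | ⟨rfl, rfl⟩ <;> tauto

theorem exists_isPath_deleteEdge [DecidableEq V] (hf : X.IsCycleLabelling f) (hn : 3 ≤ n)
    {x y : V} (hxy : 0 < X.υ x y) : ∃ l, (X.deleteEdge x y).IsPath x y l ∧
      l.IsChain fun u v => (X.deleteEdge x y).υ u v = X.υ u v ∧ 0 < X.υ u v := by
  obtain ⟨i, hi⟩ := (hf x y).1 hxy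
  have hpath := hf.isPath_cycleArc hn hi
  have hchain := hf.isChain_cycleArc hn hi
  rcases Sym2.eq_iff.1 hi with ⟨rfl, rfl⟩ | ⟨rfl, rfl⟩
  · refine ⟨_, hpath.reverse, List.isChain_reverse.2 (hchain.imp fun u v h => ?_)⟩
    rwa [FuzzyGraph.symm, X.symm v]
  · exact ⟨_, hpath, hchain⟩

theorem conn_deleteEdge_le [DecidableEq V] (hf : X.IsCycleLabelling f) (hn : 3 ≤ n)
    {x y x' y' : V} (hxy : 0 < X.υ x y) (hx'y' : 0 < X.υ x' y') (hne : s(x', y') ≠ s(x, y)) :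
    (X.deleteEdge x y).conn x y ≤ X.υ x' y' :=
  conn_le _ ((hf.exists_isPath_deleteEdge hn hxy).imp fun _ h => h.1)
    fun _ hl => hf.pathStrength_deleteEdge_le (by omega) hxy hx'y' hne hl

theorem conn_deleteEdge_eq [DecidableEq V] (hf : X.IsCycleLabelling f) (hn : 3 ≤ n) {m : ℝ}
    (hmin : ∀ x y, 0 < X.υ x y → m ≤ X.υ x y) {x y x' y' : V} (hxy : 0 < X.υ x y)
    (hx'y' : 0 < X.υ x' y') (hne : s(x', y') ≠ s(x, y)) (hm : X.υ x' y' = m) :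
    (X.deleteEdge x y).conn x y = m := by
  obtain ⟨l, hl, hchain⟩ := hf.exists_isPath_deleteEdge hn hxy
  refine le_antisymm (hm ▸ hf.conn_deleteEdge_le hn hxy hx'y' hne) ?_
  refine (le_pathStrength_of_isChain _ hl.2.2.2.1 (hchain.imp fun u v h => ?_)).trans
    (pathStrength_le_conn _ hl)
  rw [h.1]
  exact hmin u v h.2

/-- A vertex off a minimum edge has a β-strong edge, whose weight is at most that minimum. -/
theorem exists_ne_υ_eq_of_betaStrong [Fintype V] [DecidableEq V] (hf : X.IsCycleLabelling f)
    (hn : 3 ≤ n) (hsat : ∀ v, ∃ u, X.BetaStrong v u) {a b : V} (hab : 0 < X.υ a b)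
    (hmin : ∀ x y, 0 < X.υ x y → X.υ a b ≤ X.υ x y) :
    ∃ c d, 0 < X.υ c d ∧ s(c, d) ≠ s(a, b) ∧ X.υ c d = X.υ a b := by
  have : NeZero n := ⟨by omega⟩
  obtain ⟨v, hv⟩ : ({a, b}ᶜ : Finset V).Nonempty := by
    rw [← card_pos, card_compl, ← Fintype.card_congr f, ZMod.card]
    have : #{a, b} ≤ 2 := card_le_two
    omega
  obtain ⟨u, hvu, hβ⟩ := hsat v
  have hne : s(v, u) ≠ s(a, b) := fun h => by
    rcases Sym2.eq_iff.1 h with ⟨rfl, -⟩ | ⟨rfl, -⟩ <;> simp at hv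
  refine ⟨v, u, hvu, hne, le_antisymm ?_ (hmin v u hvu)⟩
  rw [hβ]
  exact hf.conn_deleteEdge_le hn hvu hab hne.symm

end IsCycleLabelling

end FuzzyGraph

/-- For a β-saturated fuzzy cycle on n vertices whose β-strong
edges all have weight w, SDI(X) = n · ⌈n/3⌉ · w. -/
theorem FuzzyGraph.SDI_of_betaSaturated_fuzzyCycle {V : Type*} [Fintype V] [DecidableEq V]
    (X : FuzzyGraph V) (hX : X.IsFuzzyCycle)
    (hsat : ∀ v : V, ∃ u : V, X.BetaStrong v u) (w : ℝ)
    (hw : ∀ a b : V, X.BetaStrong a b → X.υ a b = w) :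
    X.SDI = (Fintype.card V : ℝ) * (⌈(Fintype.card V : ℝ) / 3⌉₊ : ℝ) * w := by
  -- `Sym2.mk` is curried, so `Sym2.mk (a, b) ≠ Sym2.mk (c, d)` in `hX` only says that the ordered
  -- pairs differ; the second minimum edge is taken from β-saturation instead.
  obtain ⟨hcycle, a, b, -, -, hab, -, -, -, hmin⟩ := hX
  obtain ⟨n, hn, f, hf⟩ := hcycle.exists_isCycleLabelling
  have : NeZero n := ⟨by omega⟩
  obtain ⟨c, d, hcd, hne, hcd_eq⟩ := hf.exists_ne_υ_eq_of_betaStrong hn hsat hab hmin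
  have hconn : ∀ x y, 0 < X.υ x y → (X.deleteEdge x y).conn x y = X.υ a b := fun x y hxy => by
    by_cases h : s(a, b) = s(x, y)
    · exact hf.conn_deleteEdge_eq hn hmin hxy hcd (h ▸ hne) hcd_eq
    · exact hf.conn_deleteEdge_eq hn hmin hxy hab h rfl
  have hstrong : ∀ x y, 0 < X.υ x y → X.StrongEdge x y := fun x y hxy =>
    ⟨hxy, (hconn x y hxy).trans_le (hmin x y hxy)⟩
  have hminInc : ∀ v, X.minInc v = w := fun v => by
    obtain ⟨u, hu, hvu⟩ := hsat v
    rw [← hw v u ⟨hu, hvu⟩]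
    refine X.minInc_eq_of_strongEdge (hstrong v u hu) fun c hc => ?_
    rw [hvu, hconn v u hu]
    exact hmin v c hc.1
  have hw₀ : 0 ≤ w := hw a b ⟨hab, (hconn a b hab).symm⟩ ▸ hab.le
  have hsd : ∀ u, X.sd u = ((n + 2) / 3 : ℕ) * w := fun u =>
    X.sd_eq_of_minInc_eq hw₀ hminInc (fun D hD => by have := hf.card_le_three_mul hD; omega)
      (hf.exists_isSDS_mem_card hstrong u)
  rw [SDI, sum_congr rfl fun u _ => hsd u, sum_const, card_univ, ← Fintype.card_congr f,
    ZMod.card, Nat.ceil_natCast_div_three, nsmul_eq_mul]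
  ring
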